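/- Let R = D[X;σ,δ] over a division ring D, and let f ∈ R be a bounded polynomial with monic bound f*. Let π ∈ R generate a twosided ideal that properly divides Rf* (f* = α π for a twosided nonconstant α, π nonconstant). Then p = gcd_r(f, π) is a right divisor of f whose bound is π; in particular f has a proper factorization f = g·p with g bounded. -/

import Mathlib

/-- An Ore extension `R = D[X;σ,δ]`: `R` is a ring containing `D` via `C`, with a
distinguished element `X`, which is a free left `D`-module on the powers of `X`
(encoded by the coefficient equivalence `e`), subject to `X·a = σ(a)·X + δ(a)`,
where `δ` is a `σ`-derivation. -/
structure OreExt (D : Type*) [DivisionRing D] (σ : D ≃+* D) (δ : D → D)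
    (R : Type*) [Ring R] where
  C : D →+* R
  X : R
  e : R ≃+ (ℕ →₀ D)
  e_symm_single : ∀ (n : ℕ) (d : D), e.symm (Finsupp.single n d) = C d * X ^ n
  X_mul_C : ∀ a : D, X * C a = C (σ a) * X + C (δ a)
  δ_add : ∀ a b : D, δ (a + b) = δ a + δ b
  δ_mul : ∀ a b : D, δ (a * b) = σ a * δ b + δ a * b

namespace OreExt

variable {D R : Type*} [DivisionRing D] [Ring R] {σ : D ≃+* D} {δ : D → D}

/-- Degree, with `deg 0 = ⊥` (i.e. `-∞`). -/
noncomputable def deg (O : OreExt D σ δ R) (f : R) : WithBot ℕ := (O.e f).support.max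

/-- Degree as a natural number (`0` for the zero polynomial). -/
noncomputable def ndeg (O : OreExt D σ δ R) (f : R) : ℕ := WithBot.unbotD 0 ((O.e f).support.max)

/-- Leading coefficient. -/
noncomputable def lc (O : OreExt D σ δ R) (f : R) : D := O.e f (O.ndeg f)

/-- `f` is irreducible: it has positive degree and in any factorization one of the two
factors is a constant (an element of `D`). -/
def IrreducibleOre (O : OreExt D σ δ R) (f : R) : Prop :=
  0 < O.ndeg f ∧ ∀ g h : R, f = g * h → (∃ d : D, g = O.C d) ∨ (∃ d : D, h = O.C d)

end OreExt

/-- A left ideal is twosided. -/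
def IsTwoSidedIdeal' {R : Type*} [Ring R] (I : Ideal R) : Prop :=
  ∀ x ∈ I, ∀ r : R, x * r ∈ I

/-- `b` is a bound of `f`: the left ideal `Rb` is twosided and is the largest twosided
ideal contained in `Rf`. -/
def IsBound {R : Type*} [Ring R] (f b : R) : Prop :=
  Ideal.span {b} ≤ Ideal.span {f} ∧ IsTwoSidedIdeal' (Ideal.span {b}) ∧
    ∀ J : Ideal R, IsTwoSidedIdeal' J → J ≤ Ideal.span {f} → J ≤ Ideal.span {b}

/-!
Degree is additive in `D[X;σ,δ]` and the division algorithm holds, so every left ideal is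
principal; in particular every `f` has a bound, a generator of the largest twosided ideal
`{r | r R ⊆ R f}` inside `R f`.

Since `Rα` is twosided, `α (Rf + Rπ) ⊆ Rf + R b = Rf`. Writing `f = g p`, this gives
`α p ∈ R g p`, so `α ∈ R g` and `g` has a nonzero bound. If `q` is the bound of `p`, then
`π ∈ R q` by maximality of `Rq`, while `R α q` is a twosided ideal inside `R f`, hence inside
`R b = R α π`. Comparing degrees, `π` and `q` differ by a unit of `D`, so `R q = R π`.
-/

namespace OreExt

variable {D R : Type*} [DivisionRing D] [Ring R] {σ : D ≃+* D} {δ : D → D}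
  (O : OreExt D σ δ R)

theorem δ_zero (O : OreExt D σ δ R) : δ 0 = 0 := by
  simpa using O.δ_add 0 0

theorem e_monomial (n : ℕ) (d : D) : O.e (O.C d * O.X ^ n) = Finsupp.single n d := by
  rw [← O.e_symm_single, AddEquiv.apply_symm_apply]

theorem sum_monomial (f : R) : (O.e f).sum (fun n d => O.C d * O.X ^ n) = f := by
  simp_rw [← O.e_symm_single, ← map_finsuppSum, Finsupp.sum_single, AddEquiv.symm_apply_apply]

theorem e_C_mul (d : D) (f : R) : O.e (O.C d * f) = d • O.e f := by
  conv_lhs => rw [← O.sum_monomial f]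
  simp_rw [Finsupp.mul_sum, ← mul_assoc, ← map_mul, map_finsuppSum, e_monomial,
    ← Finsupp.smul_single', ← Finsupp.smul_sum, Finsupp.sum_single]

theorem e_X_mul_succ (f : R) (m : ℕ) :
    O.e (O.X * f) (m + 1) = σ (O.e f m) + δ (O.e f (m + 1)) := by
  conv_lhs => rw [← O.sum_monomial f]
  have hX : ∀ n d, O.X * (O.C d * O.X ^ n) = O.C (σ d) * O.X ^ (n + 1) + O.C (δ d) * O.X ^ n :=
    fun n d => by rw [← mul_assoc, O.X_mul_C, add_mul, mul_assoc, ← pow_succ']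
  simp_rw [Finsupp.mul_sum, hX, map_finsuppSum, map_add, e_monomial, Finsupp.sum_apply,
    Finsupp.add_apply, Finsupp.single_apply, Finsupp.sum_add, add_left_inj]
  simp only [Finsupp.sum_ite_eq', Finsupp.mem_support_iff, ne_eq]
  split_ifs <;> simp_all [O.δ_zero]

def DegLE (f : R) (n : ℕ) : Prop := ∀ k, n < k → O.e f k = 0

theorem le_ndeg_of_e_ne_zero {f : R} {k : ℕ} (h : O.e f k ≠ 0) : k ≤ O.ndeg f := by
  obtain ⟨m, hm⟩ := Finset.max_of_mem (Finsupp.mem_support_iff.mpr h)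
  simpa [ndeg, hm] using Finset.le_max_of_eq (Finsupp.mem_support_iff.mpr h) hm

theorem degLE_ndeg (f : R) : O.DegLE f (O.ndeg f) :=
  fun _ hk => by_contra fun h => (O.le_ndeg_of_e_ne_zero h).not_gt hk

theorem lc_ne_zero {f : R} (hf : f ≠ 0) : O.lc f ≠ 0 := by
  obtain ⟨m, hm⟩ := Finset.max_of_nonempty (Finsupp.support_nonempty_iff.mpr
    ((AddEquivClass.map_ne_zero_iff (f := O.e)).mpr hf))
  have hndeg : O.ndeg f = m := by simp [ndeg, hm]
  rw [lc, hndeg, ← Finsupp.mem_support_iff]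
  exact Finset.mem_of_max hm

theorem iterate_lc_ne_zero {f : R} (hf : f ≠ 0) (j : ℕ) : σ^[j] (O.lc f) ≠ 0 := by
  rw [← RingAut.coe_pow]
  exact (map_ne_zero _).mpr (O.lc_ne_zero hf)

theorem ndeg_lt_of_e_eq_zero {f : R} {n : ℕ} (hf : f ≠ 0) (h : ∀ k, n ≤ k → O.e f k = 0) :
    O.ndeg f < n :=
  lt_of_not_ge fun hn => O.lc_ne_zero hf (h _ hn)

theorem ndeg_eq_of_degLE {f : R} {n : ℕ} (hn : O.e f n ≠ 0) (h : O.DegLE f n) :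
    O.ndeg f = n :=
  le_antisymm (Nat.lt_succ_iff.mp (O.ndeg_lt_of_e_eq_zero (by rintro rfl; simp at hn) h))
    (O.le_ndeg_of_e_ne_zero hn)

theorem ndeg_zero : O.ndeg 0 = 0 := by
  simp [ndeg]

theorem eq_C_of_ndeg_eq_zero {f : R} (h : O.ndeg f = 0) : f = O.C (O.e f 0) := by
  have hdeg := O.degLE_ndeg f
  rw [h] at hdeg
  apply O.e.injective
  rw [← mul_one (O.C _), ← pow_zero O.X, e_monomial]
  ext (_ | k)
  · simp
  · simp [hdeg (k + 1) k.succ_pos]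

theorem degLE_X_mul {f : R} {n : ℕ} (h : O.DegLE f n) :
    O.DegLE (O.X * f) (n + 1) ∧ O.e (O.X * f) (n + 1) = σ (O.e f n) := by
  refine ⟨fun k hk => ?_, ?_⟩
  · obtain ⟨m, rfl⟩ := Nat.exists_eq_add_one.mpr (n.succ_pos.trans hk)
    rw [e_X_mul_succ, h m (by omega), h (m + 1) (by omega), map_zero, O.δ_zero, add_zero]
  · rw [e_X_mul_succ, h (n + 1) n.lt_succ_self, O.δ_zero, add_zero]

theorem degLE_X_pow_mul {f : R} {n : ℕ} (h : O.DegLE f n) (j : ℕ) :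
    O.DegLE (O.X ^ j * f) (n + j) ∧ O.e (O.X ^ j * f) (n + j) = σ^[j] (O.e f n) := by
  induction j with
  | zero => simpa using h
  | succ j ih =>
    rw [pow_succ', mul_assoc, ← add_assoc, Function.iterate_succ_apply', ← ih.2]
    exact O.degLE_X_mul ih.1

theorem degLE_monomial_mul {f : R} {n : ℕ} (h : O.DegLE f n) (d : D) (j : ℕ) :
    O.DegLE (O.C d * O.X ^ j * f) (n + j) ∧
      O.e (O.C d * O.X ^ j * f) (n + j) = d * σ^[j] (O.e f n) := by
  obtain ⟨hdeg, hlc⟩ := O.degLE_X_pow_mul h j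
  refine ⟨fun k hk => ?_, ?_⟩ <;>
    simp only [mul_assoc, e_C_mul, Finsupp.smul_apply, smul_eq_mul]
  · rw [hdeg k hk, mul_zero]
  · rw [hlc]

theorem degLE_mul {g f : R} {m n : ℕ} (hg : O.DegLE g m) (hf : O.DegLE f n) :
    O.DegLE (g * f) (m + n) ∧ O.e (g * f) (m + n) = O.e g m * σ^[m] (O.e f n) := by
  have hsum : ∀ k, O.e (g * f) k = (O.e g).sum fun i a => O.e (O.C a * O.X ^ i * f) k := by
    intro k
    conv_lhs => rw [← O.sum_monomial g]
    rw [Finsupp.sum_mul, map_finsuppSum, Finsupp.sum_apply]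
  have hle : ∀ i ∈ (O.e g).support, i ≤ m :=
    fun i hi => not_lt.mp fun hmi => Finsupp.mem_support_iff.mp hi (hg i hmi)
  refine ⟨fun k hk => ?_, ?_⟩
  · rw [hsum]
    refine Finset.sum_eq_zero fun i hi => (O.degLE_monomial_mul hf _ i).1 k ?_
    have := hle i hi
    omega
  · rw [hsum, Finsupp.sum, Finset.sum_eq_single m, add_comm]
    · exact (O.degLE_monomial_mul hf _ m).2
    · intro i hi him
      refine (O.degLE_monomial_mul hf _ i).1 _ ?_
      have := hle i hi
      omega
    · intro hm
      rw [add_comm, (O.degLE_monomial_mul hf _ m).2, Finsupp.notMem_support_iff.mp hm, zero_mul]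

theorem e_ndeg_add_ndeg_mul_ne_zero {g f : R} (hg : g ≠ 0) (hf : f ≠ 0) :
    O.e (g * f) (O.ndeg g + O.ndeg f) ≠ 0 := by
  rw [(O.degLE_mul (O.degLE_ndeg g) (O.degLE_ndeg f)).2]
  exact mul_ne_zero (O.lc_ne_zero hg) (O.iterate_lc_ne_zero hf _)

theorem noZeroDivisors (O : OreExt D σ δ R) : NoZeroDivisors R where
  eq_zero_or_eq_zero_of_mul_eq_zero {g f} h := by
    by_contra! hgf
    exact O.e_ndeg_add_ndeg_mul_ne_zero hgf.1 hgf.2 (by simp [h])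

theorem ndeg_mul {g f : R} (hg : g ≠ 0) (hf : f ≠ 0) :
    O.ndeg (g * f) = O.ndeg g + O.ndeg f :=
  O.ndeg_eq_of_degLE (O.e_ndeg_add_ndeg_mul_ne_zero hg hf)
    (O.degLE_mul (O.degLE_ndeg g) (O.degLE_ndeg f)).1

theorem exists_e_sub_mul_eq_zero {g : R} (hg : g ≠ 0) {f : R} (h : O.ndeg g ≤ O.ndeg f) :
    ∃ q : R, ∀ k, O.ndeg f ≤ k → O.e (f - q * g) k = 0 := by
  set j := O.ndeg f - O.ndeg g
  set d := O.lc f * (σ^[j] (O.lc g))⁻¹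
  obtain ⟨hdeg, hcoeff⟩ := O.degLE_monomial_mul (O.degLE_ndeg g) d j
  rw [show O.ndeg g + j = O.ndeg f by omega] at hdeg hcoeff
  refine ⟨O.C d * O.X ^ j, fun k hk => ?_⟩
  rw [map_sub, Finsupp.sub_apply, sub_eq_zero]
  rcases hk.eq_or_lt with rfl | hk
  · rw [hcoeff]
    exact (inv_mul_cancel_right₀ (O.iterate_lc_ne_zero hg j) _).symm
  · rw [O.degLE_ndeg f k hk, hdeg k hk]

theorem isPrincipalIdealRing (O : OreExt D σ δ R) : IsPrincipalIdealRing R where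
  principal I := by
    classical
    by_cases hI : I = ⊥
    · exact hI ▸ bot_isPrincipal
    have hex : ∃ n, ∃ c ∈ I, c ≠ 0 ∧ O.ndeg c = n := by
      obtain ⟨c, hcI, hc0⟩ := Submodule.exists_mem_ne_zero_of_ne_bot hI
      exact ⟨_, c, hcI, hc0, rfl⟩
    obtain ⟨c, hcI, hc0, hcn⟩ := Nat.find_spec hex
    refine ⟨c, le_antisymm (fun x hx => ?_) ((Ideal.span_singleton_le_iff_mem I).mpr hcI)⟩
    change x ∈ Ideal.span {c}
    induction hn : O.ndeg x using Nat.strong_induction_on generalizing x with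
    | _ n ih =>
      by_cases hx0 : x = 0
      · simp [hx0]
      obtain ⟨q, hq⟩ := O.exists_e_sub_mul_eq_zero hc0 (f := x)
        (hcn ▸ Nat.find_min' hex ⟨x, hx, hx0, rfl⟩)
      have hr : x - q * c ∈ Ideal.span {c} := by
        by_cases hr0 : x - q * c = 0
        · simp [hr0]
        exact ih _ (hn ▸ O.ndeg_lt_of_e_eq_zero hr0 hq) _
          (I.sub_mem hx (I.mul_mem_left q hcI)) rfl
      simpa using Ideal.add_mem _ hr (Ideal.mul_mem_left _ q (Ideal.mem_span_singleton_self c))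

theorem ndeg_le_of_mem_span_singleton {x y : R} (hy : y ≠ 0) (h : y ∈ Ideal.span {x}) :
    O.ndeg x ≤ O.ndeg y := by
  obtain ⟨s, rfl⟩ := Ideal.mem_span_singleton'.mp h
  rw [O.ndeg_mul (left_ne_zero_of_mul hy) (right_ne_zero_of_mul hy)]
  exact Nat.le_add_left _ _

theorem mem_span_singleton_of_ndeg_le {x y : R} (hx : x ≠ 0) (h : x ∈ Ideal.span {y})
    (hdeg : O.ndeg x ≤ O.ndeg y) : y ∈ Ideal.span {x} := by
  obtain ⟨s, rfl⟩ := Ideal.mem_span_singleton'.mp h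
  have hs0 : O.ndeg s = 0 := by
    rw [O.ndeg_mul (left_ne_zero_of_mul hx) (right_ne_zero_of_mul hx)] at hdeg
    omega
  obtain ⟨d, rfl⟩ : ∃ d, s = O.C d := ⟨_, O.eq_C_of_ndeg_eq_zero hs0⟩
  have hd : d ≠ 0 := by
    rintro rfl
    simp at hx
  refine Ideal.mem_span_singleton'.mpr ⟨O.C d⁻¹, ?_⟩
  rw [← mul_assoc, ← map_mul, inv_mul_cancel₀ hd, map_one, one_mul]

theorem mem_span_singleton_of_mul_mem (O : OreExt D σ δ R) {a x y : R} (ha : a ≠ 0)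
    (hx : x ≠ 0) (hxy : x ∈ Ideal.span {y}) (h : a * y ∈ Ideal.span {a * x}) :
    y ∈ Ideal.span {x} := by
  have hy : y ≠ 0 := by
    rintro rfl
    simp_all
  have := O.noZeroDivisors
  have hdeg := O.ndeg_le_of_mem_span_singleton (mul_ne_zero ha hy) h
  rw [O.ndeg_mul ha hx, O.ndeg_mul ha hy, add_le_add_iff_left] at hdeg
  exact O.mem_span_singleton_of_ndeg_le hx hxy hdeg

end OreExt

section Bound

variable {R : Type*} [Ring R]

theorem IsTwoSidedIdeal'.exists_mul_eq {a : R} (ha : IsTwoSidedIdeal' (Ideal.span {a})) (r : R) :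
    ∃ w, w * a = a * r :=
  Ideal.mem_span_singleton'.mp (ha a (Ideal.mem_span_singleton_self a) r)

theorem IsTwoSidedIdeal'.span_singleton_mul {a b : R} (ha : IsTwoSidedIdeal' (Ideal.span {a}))
    (hb : IsTwoSidedIdeal' (Ideal.span {b})) : IsTwoSidedIdeal' (Ideal.span {a * b}) := by
  intro x hx r
  obtain ⟨u, rfl⟩ := Ideal.mem_span_singleton'.mp hx
  obtain ⟨v, hv⟩ := hb.exists_mul_eq r
  obtain ⟨w, hw⟩ := ha.exists_mul_eq v
  refine Ideal.mem_span_singleton'.mpr ⟨u * w, ?_⟩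
  calc u * w * (a * b) = u * (w * a) * b := by noncomm_ring
    _ = u * a * (v * b) := by rw [hw]; noncomm_ring
    _ = u * (a * b) * r := by rw [hv]; noncomm_ring

theorem IsTwoSidedIdeal'.mul_mem_of_mem_sup {a c f x : R} (ha : IsTwoSidedIdeal' (Ideal.span {a}))
    (hac : a * c ∈ Ideal.span {f}) (hx : x ∈ Ideal.span {f} ⊔ Ideal.span {c}) :
    a * x ∈ Ideal.span {f} := by
  obtain ⟨y, hy, z, hz, rfl⟩ := Submodule.mem_sup.mp hx
  obtain ⟨u, rfl⟩ := Ideal.mem_span_singleton'.mp hy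
  obtain ⟨v, rfl⟩ := Ideal.mem_span_singleton'.mp hz
  obtain ⟨u', hu'⟩ := ha.exists_mul_eq u
  obtain ⟨v', hv'⟩ := ha.exists_mul_eq v
  rw [mul_add, ← mul_assoc, ← hu', ← mul_assoc, ← hv', mul_assoc, mul_assoc]
  exact Ideal.add_mem _ (Ideal.mul_mem_left _ _ (Ideal.mul_mem_left _ _
    (Ideal.mem_span_singleton_self f))) (Ideal.mul_mem_left _ _ hac)

theorem exists_isBound [IsPrincipalIdealRing R] (f : R) : ∃ b, IsBound f b := by
  obtain ⟨b, hb⟩ :=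
    (IsPrincipalIdealRing.principal ((Ideal.span {f}).colon (Set.univ : Set R))).principal
  refine ⟨b, ?_, ?_, fun J hJ hJf r hr => ?_⟩ <;> rw [← Ideal.submodule_span_eq, ← hb]
  · exact fun r hr => by simpa using Submodule.mem_colon.mp hr 1 trivial
  · intro x hx r
    exact Submodule.mem_colon.mpr fun s _ => by
      simpa [mul_assoc] using Submodule.mem_colon.mp hx (r * s) trivial
  · exact Submodule.mem_colon.mpr fun s _ => hJf (hJ r hr s)

theorem IsBound.ne_zero {f b a : R} (hb : IsBound f b) (ha2 : IsTwoSidedIdeal' (Ideal.span {a}))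
    (ha : a ∈ Ideal.span {f}) (ha0 : a ≠ 0) : b ≠ 0 := by
  rintro rfl
  have := hb.2.2 _ ha2 ((Ideal.span_singleton_le_iff_mem _).mpr ha)
    (Ideal.mem_span_singleton_self a)
  simp_all

theorem IsBound.of_span_le {p q π : R} (hq : IsBound p q)
    (hπp : Ideal.span {π} ≤ Ideal.span {p}) (hπ2 : IsTwoSidedIdeal' (Ideal.span {π}))
    (hqπ : Ideal.span {q} ≤ Ideal.span {π}) :
    IsBound p π :=
  ⟨hπp, hπ2, fun J hJ hJp => (hq.2.2 J hJ hJp).trans hqπ⟩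

end Bound

theorem right_factor_from_bound_factor_general {D R : Type*} [DivisionRing D] [Ring R]
    (σ : D ≃+* D) (δ : D → D) (O : OreExt D σ δ R)
    (f b α π : R) (hb : IsBound f b)
    (hfact : b = α * π)
    (hα2 : IsTwoSidedIdeal' (Ideal.span {α} : Ideal R))
    (hπ2 : IsTwoSidedIdeal' (Ideal.span {π} : Ideal R))
    (hαdeg : 1 ≤ O.ndeg α) (hπdeg : 1 ≤ O.ndeg π)
    (p : R) (hp : Ideal.span {f} ⊔ Ideal.span {π} = Ideal.span {p}) :
    (∃ g : R, f = g * p ∧ ∃ bg : R, bg ≠ 0 ∧ IsBound g bg) ∧ IsBound p π := by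
  have := O.noZeroDivisors
  have := O.isPrincipalIdealRing
  have hα0 : α ≠ 0 := by rintro rfl; simp [O.ndeg_zero] at hαdeg
  have hπ0 : π ≠ 0 := by rintro rfl; simp [O.ndeg_zero] at hπdeg
  have hπp : Ideal.span {π} ≤ Ideal.span {p} := hp ▸ le_sup_right
  have hαp : ∀ x ∈ Ideal.span {p}, α * x ∈ Ideal.span {f} := fun x hx =>
    hα2.mul_mem_of_mem_sup (hfact ▸ hb.1 (Ideal.mem_span_singleton_self b)) (hp ▸ hx)
  obtain ⟨g, rfl⟩ := Ideal.mem_span_singleton'.mp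
    (hp ▸ Ideal.mem_sup_left (Ideal.mem_span_singleton_self f) : f ∈ Ideal.span {p})
  obtain ⟨bg, hbg⟩ := exists_isBound g
  obtain ⟨q, hq⟩ := exists_isBound p
  have hαg : α ∈ Ideal.span {g} := by
    have hp0 : p ≠ 0 := by
      rintro rfl
      simpa [hπ0] using hπp (Ideal.mem_span_singleton_self π)
    obtain ⟨c, hc⟩ := Ideal.mem_span_singleton'.mp (hαp p (Ideal.mem_span_singleton_self p))
    exact Ideal.mem_span_singleton'.mpr ⟨c, mul_right_cancel₀ hp0 (by rw [mul_assoc, hc])⟩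
  have hπq : π ∈ Ideal.span {q} := hq.2.2 _ hπ2 hπp (Ideal.mem_span_singleton_self π)
  have hαq : α * q ∈ Ideal.span {α * π} := hfact ▸ hb.2.2 _ (hα2.span_singleton_mul hq.2.1)
    ((Ideal.span_singleton_le_iff_mem _).mpr (hαp q (hq.1 (Ideal.mem_span_singleton_self q))))
    (Ideal.mem_span_singleton_self _)
  refine ⟨⟨g, rfl, bg, hbg.ne_zero hα2 hαg hα0, hbg⟩, hq.of_span_le hπp hπ2 ?_⟩
  exact (Ideal.span_singleton_le_iff_mem _).mpr
    (O.mem_span_singleton_of_mul_mem hα0 hπ0 hπq hαq)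

/-- if `f` has monic bound `f* = α·π` with `α, π` twosided of positive
degree, and `p = (f, π)_r`, then `p` is a right divisor of `f` with bound `π`, and `f`
has a proper factorization `f = g·p` with `g` bounded. -/
theorem right_factor_from_bound_factor {D R : Type*} [DivisionRing D] [Ring R]
    (σ : D ≃+* D) (δ : D → D) (O : OreExt D σ δ R)
    (f b α π : R) (hf : f ≠ 0) (hb : IsBound f b) (hmonic : O.lc b = 1)
    (hfact : b = α * π)
    (hα2 : IsTwoSidedIdeal' (Ideal.span {α} : Ideal R))
    (hπ2 : IsTwoSidedIdeal' (Ideal.span {π} : Ideal R))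
    (hαdeg : 1 ≤ O.ndeg α) (hπdeg : 1 ≤ O.ndeg π)
    (p : R) (hp : Ideal.span {f} ⊔ Ideal.span {π} = Ideal.span {p}) :
    (∃ g : R, f = g * p ∧ ∃ bg : R, bg ≠ 0 ∧ IsBound g bg) ∧ IsBound p π :=
  right_factor_from_bound_factor_general σ δ O f b α π hb hfact hα2 hπ2 hαdeg hπdeg p hp
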